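/- arXiv:2310.07333 — 6 statements merged into one kernel-verified Lean document; each statement's English description precedes it below -/
import Mathlib

section
/- Let g : [-1,1]^2 → ℝ^2 be 1-Lipschitz-continuous (max norm) and define f : [-1,1]^3 → ℝ^3 by f_1(x) = g_1(x_1,x_3) + 2(x_1 - trunc(2x_2 - x_3)), f_2(x) = 2x_2 - x_1 - x_3, f_3(x) = g_2(x_1,x_3) + 2(x_3 - trunc(2x_2 - x_1)), where trunc(t) = min(1, max(-1, t)). If g is positive-switching on [-1,1]^2, then f is positive-switching on [-1,1]^3. -/
/-!
Each new coordinate has the form "switching term + `2 (xᵢ - s)`" with `s ∈ [-1,1]`, and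
`xᵢ - s` is `≤ 0` at `xᵢ = -1` and `≥ 0` at `xᵢ = 1`; sums of such terms keep this sign pattern.
For `f₁, f₃` the switching term is `g₁, g₂` and `s` is a truncation; `f₂ = (x₂ - x₁) + (x₂ - x₃)`.
-/

open Set

/-- The sign condition of a positive-switching coordinate `y` at the point `x` of `[a, b]`. -/
def PosSwitchAt (a b x y : ℝ) : Prop := (x = a → y ≤ 0) ∧ (x = b → 0 ≤ y)

namespace PosSwitchAt

variable {a b x y z : ℝ}

theorem add (hy : PosSwitchAt a b x y) (hz : PosSwitchAt a b x z) :
    PosSwitchAt a b x (y + z) :=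
  ⟨fun hx => add_nonpos (hy.1 hx) (hz.1 hx), fun hx => add_nonneg (hy.2 hx) (hz.2 hx)⟩

theorem mul_left {c : ℝ} (hc : 0 ≤ c) (hy : PosSwitchAt a b x y) : PosSwitchAt a b x (c * y) :=
  ⟨fun hx => mul_nonpos_of_nonneg_of_nonpos hc (hy.1 hx), fun hx => mul_nonneg hc (hy.2 hx)⟩

end PosSwitchAt

theorem posSwitchAt_sub {a b x s : ℝ} (hs : s ∈ Icc a b) : PosSwitchAt a b x (x - s) :=
  ⟨fun hx => by linarith [hs.1], fun hx => by linarith [hs.2]⟩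

theorem min_max_mem_Icc {a b : ℝ} (hab : a ≤ b) (t : ℝ) : min b (max a t) ∈ Icc a b :=
  ⟨le_min hab (le_max_left a t), min_le_left b _⟩

theorem reduction_positive_switching_general
    (g1 g2 : ℝ → ℝ → ℝ)
    (hswitch : ∀ u v : ℝ, u ∈ Set.Icc (-1:ℝ) 1 → v ∈ Set.Icc (-1:ℝ) 1 →
      (u = -1 → g1 u v ≤ 0) ∧ (u = 1 → 0 ≤ g1 u v) ∧
      (v = -1 → g2 u v ≤ 0) ∧ (v = 1 → 0 ≤ g2 u v))
    (trunc : ℝ → ℝ) (htrunc : ∀ t, trunc t = min 1 (max (-1) t))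
    (f1 f2 f3 : ℝ → ℝ → ℝ → ℝ)
    (hf1 : ∀ x1 x2 x3, f1 x1 x2 x3 = g1 x1 x3 + 2 * (x1 - trunc (2 * x2 - x3)))
    (hf2 : ∀ x1 x2 x3, f2 x1 x2 x3 = 2 * x2 - x1 - x3)
    (hf3 : ∀ x1 x2 x3, f3 x1 x2 x3 = g2 x1 x3 + 2 * (x3 - trunc (2 * x2 - x1))) :
    ∀ x1 x2 x3 : ℝ, x1 ∈ Set.Icc (-1:ℝ) 1 → x2 ∈ Set.Icc (-1:ℝ) 1 →
      x3 ∈ Set.Icc (-1:ℝ) 1 →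
      (x1 = -1 → f1 x1 x2 x3 ≤ 0) ∧ (x1 = 1 → 0 ≤ f1 x1 x2 x3) ∧
      (x2 = -1 → f2 x1 x2 x3 ≤ 0) ∧ (x2 = 1 → 0 ≤ f2 x1 x2 x3) ∧
      (x3 = -1 → f3 x1 x2 x3 ≤ 0) ∧ (x3 = 1 → 0 ≤ f3 x1 x2 x3) := by
  intro x1 x2 x3 hx1 hx2 hx3
  have htrunc_mem (t : ℝ) : trunc t ∈ Icc (-1 : ℝ) 1 :=
    htrunc t ▸ min_max_mem_Icc (by norm_num) t
  obtain ⟨hg1_left, hg1_right, hg2_left, hg2_right⟩ := hswitch x1 x3 hx1 hx3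
  have h1 : PosSwitchAt (-1) 1 x1 (f1 x1 x2 x3) := hf1 x1 x2 x3 ▸
    PosSwitchAt.add ⟨hg1_left, hg1_right⟩ ((posSwitchAt_sub (htrunc_mem _)).mul_left two_pos.le)
  have h2 : PosSwitchAt (-1) 1 x2 (f2 x1 x2 x3) := by
    rw [hf2, show 2 * x2 - x1 - x3 = (x2 - x1) + (x2 - x3) by ring]
    exact (posSwitchAt_sub hx1).add (posSwitchAt_sub hx3)
  have h3 : PosSwitchAt (-1) 1 x3 (f3 x1 x2 x3) := hf3 x1 x2 x3 ▸
    PosSwitchAt.add ⟨hg2_left, hg2_right⟩ ((posSwitchAt_sub (htrunc_mem _)).mul_left two_pos.le)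
  exact ⟨h1.1, h1.2, h2.1, h2.2, h3.1, h3.2⟩

/-- Reduction from 2d to 3d (Claim in Prop. 1.6): if `g = (g₁,g₂)` is
1-Lipschitz (max norm) and positive-switching on `[-1,1]²`, then the
3-dimensional function `f` defined via `g` and truncation is
positive-switching on `[-1,1]³`. -/
theorem reduction_positive_switching
    (g1 g2 : ℝ → ℝ → ℝ)
    (hlip : ∀ u v u' v' : ℝ, u ∈ Set.Icc (-1:ℝ) 1 → v ∈ Set.Icc (-1:ℝ) 1 →
      u' ∈ Set.Icc (-1:ℝ) 1 → v' ∈ Set.Icc (-1:ℝ) 1 →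
      |g1 u v - g1 u' v'| ≤ max |u - u'| |v - v'| ∧
      |g2 u v - g2 u' v'| ≤ max |u - u'| |v - v'|)
    (hswitch : ∀ u v : ℝ, u ∈ Set.Icc (-1:ℝ) 1 → v ∈ Set.Icc (-1:ℝ) 1 →
      (u = -1 → g1 u v ≤ 0) ∧ (u = 1 → 0 ≤ g1 u v) ∧
      (v = -1 → g2 u v ≤ 0) ∧ (v = 1 → 0 ≤ g2 u v))
    (trunc : ℝ → ℝ) (htrunc : ∀ t, trunc t = min 1 (max (-1) t))
    (f1 f2 f3 : ℝ → ℝ → ℝ → ℝ)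
    (hf1 : ∀ x1 x2 x3, f1 x1 x2 x3 = g1 x1 x3 + 2 * (x1 - trunc (2 * x2 - x3)))
    (hf2 : ∀ x1 x2 x3, f2 x1 x2 x3 = 2 * x2 - x1 - x3)
    (hf3 : ∀ x1 x2 x3, f3 x1 x2 x3 = g2 x1 x3 + 2 * (x3 - trunc (2 * x2 - x1))) :
    ∀ x1 x2 x3 : ℝ, x1 ∈ Set.Icc (-1:ℝ) 1 → x2 ∈ Set.Icc (-1:ℝ) 1 →
      x3 ∈ Set.Icc (-1:ℝ) 1 →
      (x1 = -1 → f1 x1 x2 x3 ≤ 0) ∧ (x1 = 1 → 0 ≤ f1 x1 x2 x3) ∧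
      (x2 = -1 → f2 x1 x2 x3 ≤ 0) ∧ (x2 = 1 → 0 ≤ f2 x1 x2 x3) ∧
      (x3 = -1 → f3 x1 x2 x3 ≤ 0) ∧ (x3 = 1 → 0 ≤ f3 x1 x2 x3) :=
  reduction_positive_switching_general g1 g2 hswitch trunc htrunc f1 f2 f3 hf1 hf2 hf3
end

section
/- Let g : [-1,1]^2 → ℝ^2 be 1-Lipschitz-continuous (max norm), and define f : [-1,1]^3 → ℝ^3 by f_1(x) = g_1(x_1,x_3) + 2(x_1 - trunc(2x_2 - x_3)), f_2(x) = 2x_2 - x_1 - x_3, f_3(x) = g_2(x_1,x_3) + 2(x_3 - trunc(2x_2 - x_1)), with trunc(t) = min(1, max(-1,t)). Then f_1 is weakly increasing in x_1 and weakly decreasing in x_2; f_2 is weakly increasing in x_2 and weakly decreasing in x_1 and in x_3; and f_3 is weakly increasing in x_3 and weakly decreasing in x_2. -/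
theorem monotone_min_max {α : Type*} [LinearOrder α] (a b : α) :
    Monotone fun t => min b (max a t) :=
  fun _ _ h => min_le_min_left b (max_le_max_left a h)

theorem add_mul_le_add_mul_of_abs_sub_le {a b x x' K : ℝ} (hK : 1 ≤ K) (hx : x ≤ x')
    (h : |a - b| ≤ |x - x'|) : a + K * x ≤ b + K * x' := by
  rw [abs_of_nonpos (sub_nonpos.mpr hx)] at h
  nlinarith [(abs_le.mp h).2, mul_nonneg (sub_nonneg.mpr hK) (sub_nonneg.mpr hx)]

/-- Monotonicity properties of the 3-dimensional function built from a
1-Lipschitz 2-dimensional function `g` (Claim in Prop. 1.6):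
`f₁` is weakly increasing in `x₁` and decreasing in `x₂`; `f₂` is increasing
in `x₂` and decreasing in `x₁` and `x₃`; `f₃` is increasing in `x₃` and
decreasing in `x₂`.  All monotonicities are for the other coordinates fixed
in `[-1,1]`. -/
theorem reduction_monotonicity
    (g1 g2 : ℝ → ℝ → ℝ)
    (hlip : ∀ u v u' v' : ℝ, u ∈ Set.Icc (-1:ℝ) 1 → v ∈ Set.Icc (-1:ℝ) 1 →
      u' ∈ Set.Icc (-1:ℝ) 1 → v' ∈ Set.Icc (-1:ℝ) 1 →
      |g1 u v - g1 u' v'| ≤ max |u - u'| |v - v'| ∧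
      |g2 u v - g2 u' v'| ≤ max |u - u'| |v - v'|)
    (trunc : ℝ → ℝ) (htrunc : ∀ t, trunc t = min 1 (max (-1) t))
    (f1 f2 f3 : ℝ → ℝ → ℝ → ℝ)
    (hf1 : ∀ x1 x2 x3, f1 x1 x2 x3 = g1 x1 x3 + 2 * (x1 - trunc (2 * x2 - x3)))
    (hf2 : ∀ x1 x2 x3, f2 x1 x2 x3 = 2 * x2 - x1 - x3)
    (hf3 : ∀ x1 x2 x3, f3 x1 x2 x3 = g2 x1 x3 + 2 * (x3 - trunc (2 * x2 - x1))) :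
    ∀ x1 x2 x3 x1' x2' x3' : ℝ,
      x1 ∈ Set.Icc (-1:ℝ) 1 → x2 ∈ Set.Icc (-1:ℝ) 1 → x3 ∈ Set.Icc (-1:ℝ) 1 →
      x1' ∈ Set.Icc (-1:ℝ) 1 → x2' ∈ Set.Icc (-1:ℝ) 1 → x3' ∈ Set.Icc (-1:ℝ) 1 →
      (x1 ≤ x1' → f1 x1 x2 x3 ≤ f1 x1' x2 x3) ∧
      (x2 ≤ x2' → f1 x1 x2' x3 ≤ f1 x1 x2 x3) ∧
      (x2 ≤ x2' → f2 x1 x2 x3 ≤ f2 x1 x2' x3) ∧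
      (x1 ≤ x1' → f2 x1' x2 x3 ≤ f2 x1 x2 x3) ∧
      (x3 ≤ x3' → f2 x1 x2 x3' ≤ f2 x1 x2 x3) ∧
      (x3 ≤ x3' → f3 x1 x2 x3 ≤ f3 x1 x2 x3') ∧
      (x2 ≤ x2' → f3 x1 x2' x3 ≤ f3 x1 x2 x3) := by
  intro x1 x2 x3 x1' x2' x3' h1 h2 h3 h1' h2' h3'
  have trunc_mono : Monotone trunc := funext htrunc ▸ monotone_min_max (-1) 1
  have g1_lip : |g1 x1 x3 - g1 x1' x3| ≤ |x1 - x1'| := by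
    simpa using (hlip x1 x3 x1' x3 h1 h3 h1' h3).1
  have g2_lip : |g2 x1 x3 - g2 x1 x3'| ≤ |x3 - x3'| := by
    simpa using (hlip x1 x3 x1 x3' h1 h3 h1 h3').2
  refine ⟨fun h => ?_, fun h => ?_, fun h => ?_, fun h => ?_, fun h => ?_, fun h => ?_,
    fun h => ?_⟩ <;> simp only [hf1, hf2, hf3]
  · linarith [add_mul_le_add_mul_of_abs_sub_le (K := 2) one_le_two h g1_lip]
  · linarith [trunc_mono (show 2 * x2 - x3 ≤ 2 * x2' - x3 by linarith)]
  · linarith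
  · linarith
  · linarith
  · linarith [add_mul_le_add_mul_of_abs_sub_le (K := 2) one_le_two h g2_lip]
  · linarith [trunc_mono (show 2 * x2 - x1 ≤ 2 * x2' - x1 by linarith)]
end

section
/- Let g : [-1,1]^2 → ℝ^2 and define f : [-1,1]^3 → ℝ^3 by f_1(x) = g_1(x_1,x_3) + 2(x_1 - trunc(2x_2 - x_3)), f_2(x) = 2x_2 - x_1 - x_3, f_3(x) = g_2(x_1,x_3) + 2(x_3 - trunc(2x_2 - x_1)), where trunc(t) = min(1, max(-1,t)). If x = (x_1,x_2,x_3) ∈ [-1,1]^3 is an ε-root of f (i.e., |f_i(x)| ≤ ε for all i), then (x_1,x_3) is a 3ε-root of g (i.e., |g_i(x_1,x_3)| ≤ 3ε for i = 1,2). -/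
/-! Since `x₁, x₃ ∈ [-1,1]` and truncation to `[-1,1]` is a 1-Lipschitz retraction, the bound
`|2x₂ - x₃ - x₁| = |f₂(x)| ≤ ε` gives `|x₁ - trunc(2x₂ - x₃)| ≤ ε`, and symmetrically for `x₃`.
Then `|g₁(x₁,x₃)| ≤ |f₁(x)| + 2|x₁ - trunc(2x₂ - x₃)| ≤ 3ε`, and likewise for `g₂`. -/

section Clamp

variable {α : Type*} [AddCommGroup α] [LinearOrder α] [IsOrderedAddMonoid α]

lemma abs_clamp_sub_le {a b x : α} (hx : x ∈ Set.Icc a b) (t : α) :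
    |min b (max a t) - x| ≤ |t - x| := by
  have hx_fixed : min b (max a x) = x := by
    rw [max_eq_right hx.1, min_eq_right hx.2]
  calc |min b (max a t) - x| = |min b (max a t) - min b (max a x)| := by rw [hx_fixed]
    _ ≤ max |b - b| |max a t - max a x| := abs_min_sub_min_le_max _ _ _ _
    _ = |max a t - max a x| := by simp
    _ ≤ |t - x| := by simpa only [max_comm a] using abs_max_sub_max_le_abs t x a

end Clamp

lemma abs_le_three_mul_of_abs_add_two_mul_le {a d ε : ℝ} (h : |a + 2 * d| ≤ ε) (hd : |d| ≤ ε) :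
    |a| ≤ 3 * ε :=
  calc |a| = |(a + 2 * d) - 2 * d| := by ring_nf
    _ ≤ |a + 2 * d| + |2 * d| := abs_sub _ _
    _ = |a + 2 * d| + 2 * |d| := by rw [abs_mul, abs_two]
    _ ≤ 3 * ε := by linarith

theorem eps_root_of_reduction_general
    (g1 g2 : ℝ → ℝ → ℝ)
    (trunc : ℝ → ℝ) (htrunc : ∀ t, trunc t = min 1 (max (-1) t))
    (f1 f2 f3 : ℝ → ℝ → ℝ → ℝ)
    (hf1 : ∀ x1 x2 x3, f1 x1 x2 x3 = g1 x1 x3 + 2 * (x1 - trunc (2 * x2 - x3)))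
    (hf2 : ∀ x1 x2 x3, f2 x1 x2 x3 = 2 * x2 - x1 - x3)
    (hf3 : ∀ x1 x2 x3, f3 x1 x2 x3 = g2 x1 x3 + 2 * (x3 - trunc (2 * x2 - x1)))
    (ε : ℝ)
    (x1 x2 x3 : ℝ) (hx1 : x1 ∈ Set.Icc (-1:ℝ) 1)
    (hx3 : x3 ∈ Set.Icc (-1:ℝ) 1)
    (h1 : |f1 x1 x2 x3| ≤ ε) (h2 : |f2 x1 x2 x3| ≤ ε) (h3 : |f3 x1 x2 x3| ≤ ε) :
    |g1 x1 x3| ≤ 3 * ε ∧ |g2 x1 x3| ≤ 3 * ε := by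
  rw [hf1] at h1
  rw [hf3] at h3
  rw [hf2] at h2
  have hc1 : |x1 - trunc (2 * x2 - x3)| ≤ ε := by
    rw [abs_sub_comm, htrunc]
    exact (abs_clamp_sub_le hx1 _).trans (by rwa [sub_right_comm])
  have hc3 : |x3 - trunc (2 * x2 - x1)| ≤ ε := by
    rw [abs_sub_comm, htrunc]
    exact (abs_clamp_sub_le hx3 _).trans h2
  exact ⟨abs_le_three_mul_of_abs_add_two_mul_le h1 hc1,
    abs_le_three_mul_of_abs_add_two_mul_le h3 hc3⟩

/-- If `x = (x₁,x₂,x₃) ∈ [-1,1]³` is an ε-root of the 3-dimensional function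
`f` built from `g`, then `(x₁,x₃)` is a 3ε-root of `g` (Claim in Prop. 1.6). -/
theorem eps_root_of_reduction
    (g1 g2 : ℝ → ℝ → ℝ)
    (trunc : ℝ → ℝ) (htrunc : ∀ t, trunc t = min 1 (max (-1) t))
    (f1 f2 f3 : ℝ → ℝ → ℝ → ℝ)
    (hf1 : ∀ x1 x2 x3, f1 x1 x2 x3 = g1 x1 x3 + 2 * (x1 - trunc (2 * x2 - x3)))
    (hf2 : ∀ x1 x2 x3, f2 x1 x2 x3 = 2 * x2 - x1 - x3)
    (hf3 : ∀ x1 x2 x3, f3 x1 x2 x3 = g2 x1 x3 + 2 * (x3 - trunc (2 * x2 - x1)))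
    (ε : ℝ) (hε : 0 ≤ ε)
    (x1 x2 x3 : ℝ) (hx1 : x1 ∈ Set.Icc (-1:ℝ) 1) (hx2 : x2 ∈ Set.Icc (-1:ℝ) 1)
    (hx3 : x3 ∈ Set.Icc (-1:ℝ) 1)
    (h1 : |f1 x1 x2 x3| ≤ ε) (h2 : |f2 x1 x2 x3| ≤ ε) (h3 : |f3 x1 x2 x3| ≤ ε) :
    |g1 x1 x3| ≤ 3 * ε ∧ |g2 x1 x3| ≤ 3 * ε :=
  eps_root_of_reduction_general g1 g2 trunc htrunc f1 f2 f3 hf1 hf2 hf3 ε x1 x2 x3 hx1 hx3 h1 h2 h3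
end

section
/- Let g : [-1,1] → ℝ be 1-Lipschitz and define f : [-1,1]^2 → ℝ^2 by f_1(x) = g(x_1) + 2(x_1 - x_2) and f_2(x) = x_2 - x_1. Then: (a) f_1 is weakly increasing in x_1 and weakly decreasing in x_2, f_2 is weakly increasing in x_2 and weakly decreasing in x_1; (b) if g has a root x ∈ [-1,1], then (x, x) is a root of f; (c) if (x_1, x_2) is an ε-root of f, then x_1 is a 3ε-root of g. -/
/-!
The slope-2 term in `f₁` dominates the 1-Lipschitz `g`, so `f₁` is increasing in `x₁`; the other
monotonicity and root claims are linear arithmetic, and `g(x₁) = f₁(x) + 2 f₂(x)` gives (c) by the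
triangle inequality.
-/

open Set

theorem LipschitzOnWith.monotoneOn_add_mul {g : ℝ → ℝ} {s : Set ℝ} {K : NNReal} {c : ℝ}
    (hg : LipschitzOnWith K g s) (hc : (K : ℝ) ≤ c) : MonotoneOn (fun x => g x + c * x) s := by
  intro x hx y hy hxy
  have hdist : g x - g y ≤ K * (y - x) := by
    calc g x - g y ≤ |g x - g y| := le_abs_self _
      _ = dist (g x) (g y) := (Real.dist_eq _ _).symm
      _ ≤ K * dist x y := hg.dist_le_mul x hx y hy
      _ = K * (y - x) := by rw [Real.dist_eq, abs_sub_comm, abs_of_nonneg (sub_nonneg.2 hxy)]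
  have hslope : (K : ℝ) * (y - x) ≤ c * (y - x) := mul_le_mul_of_nonneg_right hc (sub_nonneg.2 hxy)
  show g x + c * x ≤ g y + c * y
  linarith

theorem abs_le_of_abs_add_two_mul_le {a b ε : ℝ} (ha : |a + 2 * b| ≤ ε) (hb : |b| ≤ ε) :
    |a| ≤ 3 * ε :=
  calc |a| = |(a + 2 * b) + (-2) * b| := by ring_nf
    _ ≤ |a + 2 * b| + 2 * |b| := by
        simpa only [abs_mul, abs_neg, abs_two, neg_mul] using abs_add_le (a + 2 * b) ((-2) * b)
    _ ≤ 3 * ε := by linarith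

/-- Reduction from 1d root-finding to 2d monotone root-finding
(Prop. 1.7): with `f₁(x) = g(x₁) + 2(x₁ - x₂)` and `f₂(x) = x₂ - x₁`:
(a) all four monotonicity conditions hold; (b) a root `x` of `g` gives the
root `(x,x)` of `f`; (c) an ε-root of `f` gives a 3ε-root of `g`. -/
theorem reduction_1d_to_2d
    (g : ℝ → ℝ)
    (hlip : ∀ s t : ℝ, s ∈ Set.Icc (-1:ℝ) 1 → t ∈ Set.Icc (-1:ℝ) 1 →
      |g s - g t| ≤ |s - t|)
    (f1 f2 : ℝ → ℝ → ℝ)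
    (hf1 : ∀ x1 x2, f1 x1 x2 = g x1 + 2 * (x1 - x2))
    (hf2 : ∀ x1 x2, f2 x1 x2 = x2 - x1) :
    -- (a) monotonicity
    (∀ x1 x1' x2 x2' : ℝ, x1 ∈ Set.Icc (-1:ℝ) 1 → x1' ∈ Set.Icc (-1:ℝ) 1 →
      x2 ∈ Set.Icc (-1:ℝ) 1 → x2' ∈ Set.Icc (-1:ℝ) 1 →
      (x1 ≤ x1' → f1 x1 x2 ≤ f1 x1' x2) ∧
      (x2 ≤ x2' → f1 x1 x2' ≤ f1 x1 x2) ∧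
      (x2 ≤ x2' → f2 x1 x2 ≤ f2 x1 x2') ∧
      (x1 ≤ x1' → f2 x1' x2 ≤ f2 x1 x2)) ∧
    -- (b) roots transfer
    (∀ x : ℝ, x ∈ Set.Icc (-1:ℝ) 1 → g x = 0 → f1 x x = 0 ∧ f2 x x = 0) ∧
    -- (c) approximate roots transfer
    (∀ ε : ℝ, 0 ≤ ε → ∀ x1 x2 : ℝ, x1 ∈ Set.Icc (-1:ℝ) 1 → x2 ∈ Set.Icc (-1:ℝ) 1 →
      |f1 x1 x2| ≤ ε → |f2 x1 x2| ≤ ε → |g x1| ≤ 3 * ε) := by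
  have hg : LipschitzOnWith 1 g (Icc (-1) 1) :=
    LipschitzOnWith.of_dist_le_mul fun s hs t ht => by
      simpa only [Real.dist_eq, NNReal.coe_one, one_mul] using hlip s t hs ht
  have hmono : MonotoneOn (fun x => g x + 2 * x) (Icc (-1) 1) :=
    hg.monotoneOn_add_mul (by norm_num)
  refine ⟨fun x1 x1' x2 x2' h1 h1' _ _ => ⟨fun h => ?_, fun h => ?_, fun h => ?_, fun h => ?_⟩,
    fun x _ hx => ?_, fun ε _ x1 x2 _ _ h1 h2 => ?_⟩
  · simp only [hf1]
    linarith [hmono h1 h1' h]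
  · simp only [hf1]
    linarith
  · simp only [hf2]
    linarith
  · simp only [hf2]
    linarith
  · simp only [hf1, hf2, hx, sub_self]
    norm_num
  · rw [hf1] at h1
    rw [hf2, abs_sub_comm] at h2
    exact abs_le_of_abs_add_two_mul_le h1 h2
end

section
/- Let d ≥ 2, δ > 0, and let Z be the grid of points in a box [a,b] ⊆ ℝ^d whose coordinates are integer multiples of δ (with all b_i - a_i integer multiples of δ). Let f : Z → {-1,0,1}^d be δ-continuous (values at adjacent grid points differ by at most 1 in each coordinate) and suppose f_i is weakly decreasing in x_j for all i ≠ j. Define h : Z → ℝ^d by h(x) = x - δ·f(x). Then h is order-preserving with respect to the componentwise partial order: x ≤ x' (componentwise) implies h(x) ≤ h(x') (componentwise). -/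
/-!
The grid points of the box, ordered componentwise, form a finite partial order whose covering
relation consists of the elementary steps `x ↦ x + δ eⱼ`. A map out of a locally finite order is
monotone as soon as it increases along covering pairs, so it suffices to check a single step. If the
step is taken in coordinate `i`, δ-continuity gives `f_i` growing by at most `1`, which the increment
`δ` of `x_i` absorbs; if it is taken in another coordinate, `x_i` is unchanged and `f_i` does not
grow, by the ex-diagonal monotonicity.
-/

open Function

/-- Membership in the δ-grid on the box `[a,b] ⊆ ℝ^d`: every coordinate is of
the form `a i + k·δ` and at most `b i`. -/
def onGrid {d : ℕ} (a b : Fin d → ℝ) (δ : ℝ) (x : Fin d → ℝ) : Prop :=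
  ∀ i, (∃ k : ℕ, x i = a i + k * δ) ∧ x i ≤ b i

namespace onGrid

variable {d : ℕ} {a b : Fin d → ℝ} {δ : ℝ}

theorem setOf_finite (hδ : 0 < δ) : {x | onGrid a b δ x}.Finite := by
  let coord (i : Fin d) : Set ℝ :=
    (fun k : ℕ => a i + k * δ) '' Set.Iic ⌊(b i - a i) / δ⌋₊
  refine (Set.Finite.pi fun i => (Set.finite_Iic _).image _ : (Set.univ.pi coord).Finite).subset ?_
  intro x hx i _
  obtain ⟨⟨k, hk⟩, hkb⟩ := hx i
  refine ⟨k, Nat.le_floor ?_, hk.symm⟩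
  rw [le_div_iff₀ hδ]
  linarith

theorem add_le_of_lt (hδ : 0 < δ) {x x' : Fin d → ℝ} (hx : onGrid a b δ x)
    (hx' : onGrid a b δ x') {j : Fin d} (hlt : x j < x' j) : x j + δ ≤ x' j := by
  obtain ⟨k, hk⟩ := (hx j).1
  obtain ⟨k', hk'⟩ := (hx' j).1
  have hkk' : (k : ℝ) + 1 ≤ k' := by
    have : (k : ℝ) < k' := lt_of_mul_lt_mul_right (by linarith) hδ.le
    exact_mod_cast Nat.succ_le_of_lt (by exact_mod_cast this)
  rw [hk, hk']
  nlinarith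

theorem update_add {x : Fin d → ℝ} (hx : onGrid a b δ x) {j : Fin d} (hb : x j + δ ≤ b j) :
    onGrid a b δ (update x j (x j + δ)) := by
  intro i
  rcases eq_or_ne i j with rfl | hij
  · obtain ⟨k, hk⟩ := (hx i).1
    refine ⟨⟨k + 1, ?_⟩, ?_⟩ <;> simp only [update_self, hk, Nat.cast_succ] at hb ⊢
    · ring
    · exact hb
  · simpa only [update_of_ne hij] using hx i

theorem exists_eq_update_of_covBy (hδ : 0 < δ) {x x' : {x // onGrid a b δ x}} (h : x ⋖ x') :
    ∃ j, x'.1 = update x.1 j (x.1 j + δ) := by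
  obtain ⟨j, hj⟩ := (Pi.lt_def.mp h.lt).2
  have hstep := add_le_of_lt hδ x.2 x'.2 hj
  let y : {x // onGrid a b δ x} :=
    ⟨update x.1 j (x.1 j + δ), update_add x.2 (hstep.trans (x'.2 j).2)⟩
  have hxy : x ≤ y := fun i => by
    rcases eq_or_ne i j with rfl | hij
    · simp [y, hδ.le]
    · simp [y, update_of_ne hij]
  have hyx' : y ≤ x' := fun i => by
    rcases eq_or_ne i j with rfl | hij
    · simpa [y] using hstep
    · simpa [y, update_of_ne hij] using h.le i
  refine ⟨j, ?_⟩
  rcases h.eq_or_eq hxy hyx' with hyx | hyx'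
  · have := congrFun (congrArg Subtype.val hyx) j
    simp only [update_self, y] at this
    linarith
  · exact (congrArg Subtype.val hyx').symm

theorem monotone_of_update_add {β : Type*} [Preorder β] (hδ : 0 < δ) {g : (Fin d → ℝ) → β}
    (hg : ∀ x j, onGrid a b δ x → onGrid a b δ (update x j (x j + δ)) →
      g x ≤ g (update x j (x j + δ)))
    {x x' : Fin d → ℝ} (hx : onGrid a b δ x) (hx' : onGrid a b δ x') (hle : x ≤ x') :
    g x ≤ g x' := by
  classical
  have : Finite {x // onGrid a b δ x} := (setOf_finite hδ).to_subtype
  have := Fintype.ofFinite {x // onGrid a b δ x}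
  have := Fintype.toLocallyFiniteOrder (α := {x // onGrid a b δ x})
  have hmono : Monotone fun y : {x // onGrid a b δ x} => g y.1 := by
    refine (monotone_iff_forall_covBy _).mpr fun y y' hyy' => ?_
    obtain ⟨j, hj⟩ := exists_eq_update_of_covBy hδ hyy'
    simpa only [hj] using hg y.1 j y.2 (hj ▸ y'.2)
  exact hmono (show (⟨x, hx⟩ : {x // onGrid a b δ x}) ≤ ⟨x', hx'⟩ from hle)

end onGrid

theorem h_order_preserving_general {d : ℕ} (δ : ℝ) (hδ : 0 < δ)
    (a b : Fin d → ℝ)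
    (f : (Fin d → ℝ) → Fin d → ℤ)
    (hcont : ∀ x, onGrid a b δ x → ∀ j, onGrid a b δ (Function.update x j (x j + δ)) →
      ∀ i, |f (Function.update x j (x j + δ)) i - f x i| ≤ 1)
    (hmono : ∀ x x', onGrid a b δ x → onGrid a b δ x' →
      ∀ j, (∀ k, k ≠ j → x' k = x k) → x j ≤ x' j → ∀ i, i ≠ j → f x' i ≤ f x i) :
    ∀ x x', onGrid a b δ x → onGrid a b δ x' → (∀ i, x i ≤ x' i) →
      ∀ i, x i - δ * f x i ≤ x' i - δ * f x' i := by
  refine fun x x' hx hx' hle => onGrid.monotone_of_update_add hδ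
    (g := fun x i => x i - δ * f x i) (fun y j hy hy' i => ?_) hx hx' hle
  rcases eq_or_ne i j with rfl | hij
  · have hf : (f (update y i (y i + δ)) i : ℝ) ≤ f y i + 1 := by
      exact_mod_cast sub_le_iff_le_add'.mp (abs_le.mp (hcont y hy i hy' i)).2
    simp only [update_self]
    nlinarith
  · have hf : (f (update y j (y j + δ)) i : ℝ) ≤ f y i := by
      exact_mod_cast hmono y _ hy hy' j (fun k hk => update_of_ne hk _ _)
        (by simp [hδ.le]) i hij
    simp only [update_of_ne hij]
    nlinarith

/-- Claim 4.3: if `f : Z → {-1,0,1}^d` is δ-continuous on the grid and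
satisfies all ex-diagonal monotonicity conditions (`f_i` weakly decreasing in
`x_j` for `i ≠ j`), then `h(x) = x - δ·f(x)` is order-preserving with respect
to the componentwise order. -/
theorem h_order_preserving {d : ℕ} (hd : 2 ≤ d) (δ : ℝ) (hδ : 0 < δ)
    (a b : Fin d → ℝ) (hbox : ∀ i, ∃ m : ℕ, b i = a i + m * δ)
    (f : (Fin d → ℝ) → Fin d → ℤ)
    (hval : ∀ x, onGrid a b δ x → ∀ i, f x i = -1 ∨ f x i = 0 ∨ f x i = 1)
    (hcont : ∀ x, onGrid a b δ x → ∀ j, onGrid a b δ (Function.update x j (x j + δ)) →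
      ∀ i, |f (Function.update x j (x j + δ)) i - f x i| ≤ 1)
    (hmono : ∀ x x', onGrid a b δ x → onGrid a b δ x' →
      ∀ j, (∀ k, k ≠ j → x' k = x k) → x j ≤ x' j → ∀ i, i ≠ j → f x' i ≤ f x i) :
    ∀ x x', onGrid a b δ x → onGrid a b δ x' → (∀ i, x i ≤ x' i) →
      ∀ i, x i - δ * f x i ≤ x' i - δ * f x' i :=
  h_order_preserving_general δ hδ a b f hcont hmono
end

section
/- Let d ≥ 2, δ > 0, Z the δ-grid on a box [a,b] ⊆ ℝ^d, and f : Z → {-1,0,1}^d positive-switching with f_i weakly decreasing in x_j for all i ≠ j, and δ-continuous. Then f has a root in Z: there exists a grid point x with f(x) = 0. -/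
/-!
Index the grid by `n ∈ [0, m] ⊆ ℤ^d` and put `F n = f (a + n δ)`. The map `n ↦ n - F n` sends the
box `[0, m]` into itself because `|F| ≤ 1` and `f` is positive-switching. It is monotone: a unit
step in a coordinate `j ≠ i` does not increase `F_i` (ex-diagonal monotonicity), and a unit step in
coordinate `i` increases `F_i` by at most one (δ-continuity); unit steps generate the order on the
box. Tarski's theorem on the complete lattice `[0, m]` yields a fixed point, i.e. a root of `F`.
-/

open Set Function

theorem exists_isFixedPt_of_monotoneOn_Icc {α : Type*} [ConditionallyCompleteLattice α]
    {lo hi : α} (hlohi : lo ≤ hi) {g : α → α} (hmaps : MapsTo g (Icc lo hi) (Icc lo hi))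
    (hmono : MonotoneOn g (Icc lo hi)) : ∃ x ∈ Icc lo hi, IsFixedPt g x := by
  have : Fact (lo ≤ hi) := ⟨hlohi⟩
  let G : Icc lo hi →o Icc lo hi := ⟨hmaps.restrict g _ _, fun x y hxy => hmono x.2 y.2 hxy⟩
  exact ⟨G.lfp, G.lfp.2, congrArg Subtype.val G.isFixedPt_lfp⟩

section UnitSteps

variable {ι : Type*} {lo hi : ι → ℤ}

theorem mapsTo_sub_Icc {F : (ι → ℤ) → ι → ℤ} (hF : ∀ n ∈ Icc lo hi, ∀ i, |F n i| ≤ 1)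
    (hlo : ∀ n ∈ Icc lo hi, ∀ i, n i = lo i → F n i ≤ 0)
    (hhi : ∀ n ∈ Icc lo hi, ∀ i, n i = hi i → 0 ≤ F n i) :
    MapsTo (fun n => n - F n) (Icc lo hi) (Icc lo hi) := by
  intro n hn
  refine ⟨fun i => ?_, fun i => ?_⟩ <;> have := abs_le.1 (hF n hn i) <;> simp only [Pi.sub_apply]
  · rcases (hn.1 i).eq_or_lt with h | h
    · linarith [hlo n hn i h.symm]
    · linarith
  · rcases (hn.2 i).eq_or_lt with h | h
    · linarith [hhi n hn i h]
    · linarith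

variable [Fintype ι] [DecidableEq ι]

theorem monotoneOn_Icc_of_le_update_add_one {β : Type*} [Preorder β] {g : (ι → ℤ) → β}
    (hstep : ∀ n ∈ Icc lo hi, ∀ j, update n j (n j + 1) ∈ Icc lo hi →
      g n ≤ g (update n j (n j + 1))) :
    MonotoneOn g (Icc lo hi) := by
  classical
  have hmono : Monotone fun x : Icc lo hi => g x := by
    refine (monotone_iff_forall_covBy _).2 fun x y hxy => ?_
    have hcov : (x : ι → ℤ) ⋖ y :=
      (OrdConnected.apply_covBy_apply_iff (OrderEmbedding.subtype _)
        (by rw [OrderEmbedding.coe_subtype, Subtype.range_coe]; exact ordConnected_Icc)).2 hxy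
    -- covering pairs in `ℤ^ι` are exactly the unit steps `n ⋖ update n j (n j + 1)`
    obtain ⟨j, z, hz, hy⟩ := Pi.covBy_iff_exists_right_eq.1 hcov
    rw [Order.covBy_iff_add_one_eq] at hz
    subst hz
    simpa only [← hy] using hstep x x.2 j (hy ▸ y.2)
  exact fun x hx y hy hxy => hmono (a := ⟨x, hx⟩) (b := ⟨y, hy⟩) hxy

variable {F : (ι → ℤ) → ι → ℤ}

theorem monotoneOn_sub_of_unit_steps
    (hdiag : ∀ n ∈ Icc lo hi, ∀ i, update n i (n i + 1) ∈ Icc lo hi →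
      F (update n i (n i + 1)) i ≤ F n i + 1)
    (hoff : ∀ n ∈ Icc lo hi, ∀ i j, j ≠ i → update n j (n j + 1) ∈ Icc lo hi →
      F (update n j (n j + 1)) i ≤ F n i) :
    MonotoneOn (fun n => n - F n) (Icc lo hi) := by
  refine monotoneOn_Icc_of_le_update_add_one fun n hn j hj i => ?_
  rcases eq_or_ne j i with rfl | hji
  · simp only [Pi.sub_apply, update_self]
    linarith [hdiag n hn j hj]
  · simp only [Pi.sub_apply, update_of_ne hji.symm]
    linarith [hoff n hn i j hji hj]

theorem exists_eq_zero_of_unit_steps (hlohi : lo ≤ hi) (hF : ∀ n ∈ Icc lo hi, ∀ i, |F n i| ≤ 1)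
    (hdiag : ∀ n ∈ Icc lo hi, ∀ i, update n i (n i + 1) ∈ Icc lo hi →
      F (update n i (n i + 1)) i ≤ F n i + 1)
    (hoff : ∀ n ∈ Icc lo hi, ∀ i j, j ≠ i → update n j (n j + 1) ∈ Icc lo hi →
      F (update n j (n j + 1)) i ≤ F n i)
    (hlo : ∀ n ∈ Icc lo hi, ∀ i, n i = lo i → F n i ≤ 0)
    (hhi : ∀ n ∈ Icc lo hi, ∀ i, n i = hi i → 0 ≤ F n i) :
    ∃ n ∈ Icc lo hi, F n = 0 := by
  obtain ⟨n, hn, hfix⟩ := exists_isFixedPt_of_monotoneOn_Icc hlohi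
    (mapsTo_sub_Icc hF hlo hhi) (monotoneOn_sub_of_unit_steps hdiag hoff)
  exact ⟨n, hn, sub_eq_self.1 hfix⟩

end UnitSteps

def gridPoint {ι : Type*} (a : ι → ℝ) (δ : ℝ) (n : ι → ℤ) : ι → ℝ := fun i => a i + n i * δ

theorem gridPoint_update_add_one {ι : Type*} [DecidableEq ι] (a : ι → ℝ) (δ : ℝ) (n : ι → ℤ)
    (j : ι) :
    gridPoint a δ (update n j (n j + 1)) = update (gridPoint a δ n) j (gridPoint a δ n j + δ) := by
  ext k
  rcases eq_or_ne k j with rfl | hkj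
  · simp only [gridPoint, update_self, Int.cast_add, Int.cast_one]
    ring
  · simp [gridPoint, update_of_ne hkj]

theorem onGrid_gridPoint {d : ℕ} {a b : Fin d → ℝ} {δ : ℝ} (hδ : 0 ≤ δ) {m : Fin d → ℕ}
    (hb : ∀ i, b i = a i + m i * δ) {n : Fin d → ℤ} (hn : n ∈ Icc 0 fun i => (m i : ℤ)) :
    onGrid a b δ (gridPoint a δ n) := by
  intro i
  refine ⟨⟨(n i).toNat, by rw [gridPoint, ← Int.cast_natCast, Int.toNat_of_nonneg (hn.1 i)]⟩, ?_⟩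
  rw [gridPoint, hb]
  gcongr
  exact_mod_cast hn.2 i

theorem root_exists_exdiagonal_general {d : ℕ} (δ : ℝ) (hδ : 0 < δ)
    (a b : Fin d → ℝ) (hbox : ∀ i, ∃ m : ℕ, b i = a i + m * δ)
    (f : (Fin d → ℝ) → Fin d → ℤ)
    (hval : ∀ x, onGrid a b δ x → ∀ i, f x i = -1 ∨ f x i = 0 ∨ f x i = 1)
    (hcont : ∀ x, onGrid a b δ x → ∀ j, onGrid a b δ (Function.update x j (x j + δ)) →
      ∀ i, |f (Function.update x j (x j + δ)) i - f x i| ≤ 1)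
    (hmono : ∀ x x', onGrid a b δ x → onGrid a b δ x' →
      ∀ j, (∀ k, k ≠ j → x' k = x k) → x j ≤ x' j → ∀ i, i ≠ j → f x' i ≤ f x i)
    (hswitch : ∀ x, onGrid a b δ x →
      ∀ i, (x i = a i → f x i ≤ 0) ∧ (x i = b i → 0 ≤ f x i)) :
    ∃ x, onGrid a b δ x ∧ ∀ i, f x i = 0 := by
  choose m hm using hbox
  have hgrid n (hn : n ∈ Icc 0 fun i => (m i : ℤ)) := onGrid_gridPoint hδ.le hm hn
  obtain ⟨n, hn, hroot⟩ := exists_eq_zero_of_unit_steps (F := fun n => f (gridPoint a δ n))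
    (fun i => Int.natCast_nonneg (m i))
    (fun n hn i => by rcases hval _ (hgrid n hn) i with h | h | h <;> simp [h])
    (fun n hn i hstep => by
      have := hcont _ (hgrid n hn) i (gridPoint_update_add_one a δ n i ▸ hgrid _ hstep) i
      rw [← gridPoint_update_add_one] at this
      linarith [(abs_le.1 this).2])
    (fun n hn i j hji hstep => by
      refine hmono _ _ (hgrid n hn) (hgrid _ hstep) j (fun k hkj => ?_) ?_ i hji.symm
      · simp [gridPoint, update_of_ne hkj]
      · simp only [gridPoint, update_self]
        gcongr
        linarith)
    (fun n hn i hi => (hswitch _ (hgrid n hn) i).1 (by simp [gridPoint, hi]))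
    (fun n hn i hi => (hswitch _ (hgrid n hn) i).2 (by simp [gridPoint, hi, hm]))
  exact ⟨gridPoint a δ n, hgrid n hn, fun i => congrFun hroot i⟩

/-- Theorem 1.5 (discretized form): a positive-switching δ-continuous function
`f : Z → {-1,0,1}^d` satisfying all `d² - d` ex-diagonal monotonicity
conditions has a root on the grid. -/
theorem root_exists_exdiagonal {d : ℕ} (hd : 2 ≤ d) (δ : ℝ) (hδ : 0 < δ)
    (a b : Fin d → ℝ) (hbox : ∀ i, ∃ m : ℕ, b i = a i + m * δ)
    (f : (Fin d → ℝ) → Fin d → ℤ)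
    (hval : ∀ x, onGrid a b δ x → ∀ i, f x i = -1 ∨ f x i = 0 ∨ f x i = 1)
    (hcont : ∀ x, onGrid a b δ x → ∀ j, onGrid a b δ (Function.update x j (x j + δ)) →
      ∀ i, |f (Function.update x j (x j + δ)) i - f x i| ≤ 1)
    (hmono : ∀ x x', onGrid a b δ x → onGrid a b δ x' →
      ∀ j, (∀ k, k ≠ j → x' k = x k) → x j ≤ x' j → ∀ i, i ≠ j → f x' i ≤ f x i)
    (hswitch : ∀ x, onGrid a b δ x →
      ∀ i, (x i = a i → f x i ≤ 0) ∧ (x i = b i → 0 ≤ f x i)) :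
    ∃ x, onGrid a b δ x ∧ ∀ i, f x i = 0 :=
  root_exists_exdiagonal_general δ hδ a b hbox f hval hcont hmono hswitch
end
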